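/- arXiv:2112.03427 — 6 statements merged into one kernel-verified Lean document; each statement's English description precedes it below -/
import Mathlib

section
/- Let n ≥ 1 and let T be a set of transpositions in Equiv.Perm (Fin n). Then the subgroup generated by T is all of Equiv.Perm (Fin n) if and only if the subgroup generated by T acts transitively on Fin n. -/
open Equiv

theorem Equiv.Perm.closure_eq_top_iff_forall_exists_apply_eq_of_isSwap
    {α : Type*} [DecidableEq α] [Finite α] {S : Set (Perm α)} (hS : ∀ σ ∈ S, σ.IsSwap) :
    Subgroup.closure S = ⊤ ↔ ∀ x y : α, ∃ σ ∈ Subgroup.closure S, σ x = y := by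
  refine ⟨fun h x y ↦ ⟨swap x y, h ▸ Subgroup.mem_top _, swap_apply_left x y⟩, fun h ↦ ?_⟩
  have : MulAction.IsPretransitive (Subgroup.closure S) α :=
    ⟨fun x y ↦ let ⟨σ, hσ, hσx⟩ := h x y; ⟨⟨σ, hσ⟩, hσx⟩⟩
  -- In a group generated by transpositions, `swap x y` is a member as soon as `x` and `y`
  -- share an orbit; so a transitive one contains all transpositions, which generate `Perm α`.
  exact closure_of_isSwap_of_isPretransitive hS

theorem closure_swaps_eq_top_iff_transitive_general (n : ℕ)
    (T : Set (Equiv.Perm (Fin n))) (hT : ∀ t ∈ T, t.IsSwap) :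
    Subgroup.closure T = ⊤ ↔
      ∀ i j : Fin n, ∃ h ∈ Subgroup.closure T, h i = j :=
  Perm.closure_eq_top_iff_forall_exists_apply_eq_of_isSwap hT

/-- A set of transpositions in the symmetric group on `Fin n` generates the whole
symmetric group if and only if the subgroup it generates acts transitively on `Fin n`. -/
theorem closure_swaps_eq_top_iff_transitive (n : ℕ) (hn : 1 ≤ n)
    (T : Set (Equiv.Perm (Fin n))) (hT : ∀ t ∈ T, t.IsSwap) :
    Subgroup.closure T = ⊤ ↔
      ∀ i j : Fin n, ∃ h ∈ Subgroup.closure T, h i = j :=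
  closure_swaps_eq_top_iff_transitive_general n T hT
end

section
/- Fix integers m ≥ 1 and n ≥ 2 and take p = m, so the group is G(m,m,n). The group G(m,1,n) acts on the set (ℤ/mℤ) × Fin n by [u; a]·(c, j) = (c + a_j, u(j)). Then a set S of reflections of G(m,m,n) generates G(m,m,n) if and only if the subgroup generated by S acts transitively on (ℤ/mℤ) × Fin n. -/
@[ext]
structure GG (m n : ℕ) where
  perm : Equiv.Perm (Fin n)
  col : Fin n → ZMod m

namespace GG

variable {m n : ℕ}

instance : Mul (GG m n) := ⟨fun g h => ⟨g.perm * h.perm, g.col ∘ ⇑h.perm + h.col⟩⟩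
instance : One (GG m n) := ⟨⟨1, 0⟩⟩
instance : Inv (GG m n) := ⟨fun g => ⟨g.perm⁻¹, -(g.col ∘ ⇑g.perm⁻¹)⟩⟩

@[simp] theorem mul_perm (g h : GG m n) : (g * h).perm = g.perm * h.perm := rfl
@[simp] theorem mul_col (g h : GG m n) : (g * h).col = g.col ∘ ⇑h.perm + h.col := rfl
@[simp] theorem one_perm : (1 : GG m n).perm = 1 := rfl
@[simp] theorem one_col : (1 : GG m n).col = 0 := rfl
@[simp] theorem inv_perm (g : GG m n) : g⁻¹.perm = g.perm⁻¹ := rfl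
@[simp] theorem inv_col (g : GG m n) : g⁻¹.col = -(g.col ∘ ⇑g.perm⁻¹) := rfl

instance : Group (GG m n) :=
  Group.ofLeftAxioms
    (fun a b c => by
      refine GG.ext (mul_assoc _ _ _) ?_
      funext i
      simp [Equiv.Perm.mul_apply, add_assoc])
    (fun a => by
      refine GG.ext (one_mul _) ?_
      funext i
      simp)
    (fun a => by
      refine GG.ext (inv_mul_cancel _) ?_
      funext i
      simp)

/-- The color (weight) of an element of `G(m,1,n)`. -/
def wt (g : GG m n) : ZMod m := ∑ i, g.col i

@[simp] theorem wt_mul (g h : GG m n) : wt (g * h) = wt g + wt h := by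
  simp only [wt, mul_col, Pi.add_apply, Function.comp_apply, Finset.sum_add_distrib]
  congr 1
  exact Equiv.sum_comp h.perm g.col

@[simp] theorem wt_one : wt (1 : GG m n) = 0 := by simp [wt]

@[simp] theorem wt_inv (g : GG m n) : wt g⁻¹ = -wt g := by
  simp only [wt, inv_col, Pi.neg_apply, Function.comp_apply, Finset.sum_neg_distrib]
  congr 1
  exact Equiv.sum_comp g.perm⁻¹ g.col

/-- A transposition-like reflection `[(i j); a]`. -/
def IsTranspositionLike (g : GG m n) : Prop :=
  ∃ i j : Fin n, i ≠ j ∧ g.perm = Equiv.swap i j ∧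
    (∀ l, l ≠ i → l ≠ j → g.col l = 0) ∧ g.col i + g.col j = 0

/-- A diagonal reflection of `G(m,p,n)`. -/
def IsDiagonalRefl (p : ℕ) (g : GG m n) : Prop :=
  g.perm = 1 ∧ ∃ i : Fin n, g.col i ≠ 0 ∧ g.col i ∈ AddSubgroup.zmultiples ((p : ZMod m)) ∧
    ∀ l, l ≠ i → g.col l = 0

/-- A reflection of `G(m,p,n)`. -/
def IsRefl (p : ℕ) (g : GG m n) : Prop := IsTranspositionLike g ∨ IsDiagonalRefl p g

/-- The subgroup of `G(m,1,n)` of elements whose colors all lie in `A` and whose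
total color lies in `B`. -/
def Gsub (m n : ℕ) (A B : AddSubgroup (ZMod m)) : Subgroup (GG m n) where
  carrier := {g | (∀ i, g.col i ∈ A) ∧ wt g ∈ B}
  one_mem' := ⟨fun i => by simpa using A.zero_mem, by simpa using B.zero_mem⟩
  mul_mem' := fun {g h} hg hh =>
    ⟨fun i => by simpa using A.add_mem (hg.1 (h.perm i)) (hh.1 i),
     by rw [wt_mul]; exact B.add_mem hg.2 hh.2⟩
  inv_mem' := fun {g} hg =>
    ⟨fun i => by simpa using A.neg_mem (hg.1 (g.perm⁻¹ i)),
     by rw [wt_inv]; exact B.neg_mem hg.2⟩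

/-- The group `G(m,p,n)` as a subgroup of `G(m,1,n)`. -/
def Gmpn (m p n : ℕ) : Subgroup (GG m n) :=
  Gsub m n ⊤ (AddSubgroup.zmultiples ((p : ZMod m)))

/-- The projection `π_{m/r} : G(m,1,n) → G(r,1,n)`. -/
def pimap (r : ℕ) (h : r ∣ m) (g : GG m n) : GG r n :=
  ⟨g.perm, fun i => ZMod.castHom h (ZMod r) (g.col i)⟩

/-- The color of the cycle of `g` through the point `y`. -/
def cycleColor (g : GG m n) (y : Fin n) : ZMod m :=
  ∑ x ∈ insert y (g.perm.cycleOf y).support, g.col x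

/-- The number of full reflection factorizations of `g` in `G(m,p,n)` of length `N`. -/
noncomputable def fullCount (p : ℕ) (g : GG m n) (N : ℕ) : ℕ :=
  Nat.card {t : Fin N → GG m n // (∀ i, IsRefl p (t i)) ∧ (List.ofFn t).prod = g ∧
    Subgroup.closure (Set.range t) = Gmpn m p n}

/-- The number of full reflection factorizations of `c` of length `N` in the cyclic
group `G(m,p,1) ≅ pℤ/mℤ`. -/
noncomputable def cycCount (p : ℕ) (c : ZMod m) (N : ℕ) : ℕ :=
  Nat.card {x : Fin N → ZMod m // (∀ i, x i ≠ 0 ∧ x i ∈ AddSubgroup.zmultiples ((p : ZMod m))) ∧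
    ∑ i, x i = c ∧ AddSubgroup.closure (Set.range x) = AddSubgroup.zmultiples ((p : ZMod m))}

end GG

/-- The number of transitive transposition factorizations of `σ` of length `N`. -/
noncomputable def transCount (n : ℕ) (σ : Equiv.Perm (Fin n)) (N : ℕ) : ℕ :=
  Nat.card {t : Fin N → Equiv.Perm (Fin n) // (∀ i, (t i).IsSwap) ∧ (List.ofFn t).prod = σ ∧
    ∀ x y : Fin n, ∃ h ∈ Subgroup.closure (Set.range t), h x = y}

/-!
A diagonal reflection of `G(m,m,n)` would need a nonzero multiple of `m` in `ℤ/mℤ`, so all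
reflections are transposition-like. The elements `[(x y); c(e_x - e_y)]` and `[1; c(e_x - e_z)]`
of `G(m,m,n)` already act transitively. Conversely, let `H` be generated by transposition-like
elements and act transitively. Their permutation parts are transpositions
generating a transitive group, hence all of `Sym(n)`. Call `(a, x)` and `(b, y)` linked when `H`
contains `[(x y); (b - a)(e_x - e_y)]` if `x ≠ y`, respectively every `[1; (b - a)(e_u - e_v)]`
if `x = y`. Linkedness is an equivalence relation (lifts of `Sym(n)` move one diagonal element
`c(e_x - e_y)` of `H` to all the others), and each generator `s` links every `p` to `s • p`, so
every point is linked to its whole `H`-orbit. Transitivity then puts every `[1; c(e_u - e_v)]`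
into `H`, and these together with the lifts of `Sym(n)` give all of `G(m,m,n)`.
-/

theorem Equiv.Perm.exists_apply_eq_and_apply_eq {α : Type*} [DecidableEq α] {x y x' y' : α}
    (hxy : x ≠ y) (hxy' : x' ≠ y') : ∃ u : Equiv.Perm α, u x = x' ∧ u y = y' := by
  refine ⟨Equiv.swap (Equiv.swap x x' y) y' * Equiv.swap x x', ?_, by simp⟩
  have : Equiv.swap x x' y ≠ x' := by
    rw [Ne, Equiv.swap_apply_eq_iff, Equiv.swap_apply_right]; exact hxy.symm
  simp [Equiv.swap_apply_of_ne_of_ne this.symm hxy']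

theorem AddSubgroup.pi_mem_of_sum_eq_zero {ι M : Type*} [Fintype ι] [DecidableEq ι]
    [AddCommGroup M] {A : AddSubgroup (ι → M)} (hA : ∀ x y c, Pi.single x c - Pi.single y c ∈ A)
    {a : ι → M} (ha : ∑ i, a i = 0) : a ∈ A := by
  cases isEmpty_or_nonempty ι
  · rw [Subsingleton.elim a 0]
    exact A.zero_mem
  obtain ⟨x₀⟩ := ‹Nonempty ι›
  have hx₀ : ∑ i, Pi.single x₀ (a i) = (0 : ι → M) := by
    simpa [ha] using (map_sum (AddMonoidHom.single (fun _ : ι => M) x₀) a Finset.univ).symm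
  have : a = ∑ i, (Pi.single i (a i) - Pi.single x₀ (a i)) := by
    rw [Finset.sum_sub_distrib, Finset.univ_sum_single, hx₀, sub_zero]
  rw [this]
  exact A.sum_mem fun i _ => hA _ _ _

namespace GG

variable {m n : ℕ}

instance : SMul (GG m n) (ZMod m × Fin n) := ⟨fun g p => (p.1 + g.col p.2, g.perm p.2)⟩

theorem smul_def (g : GG m n) (p : ZMod m × Fin n) :
    g • p = (p.1 + g.col p.2, g.perm p.2) := rfl

instance : MulAction (GG m n) (ZMod m × Fin n) where
  one_smul p := by simp [smul_def]
  mul_smul g h p := by simp [smul_def, add_assoc, add_comm (g.col _)]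

theorem mem_Gmpn_self_iff {g : GG m n} : g ∈ Gmpn m m n ↔ wt g = 0 := by
  simp [Gmpn, Gsub]

theorem not_isDiagonalRefl_self (g : GG m n) : ¬IsDiagonalRefl m g := by
  rintro ⟨-, i, hne, hmem, -⟩
  simp at hmem
  exact hne hmem

def permHom : GG m n →* Equiv.Perm (Fin n) := MonoidHom.mk' perm fun _ _ => rfl

@[simp] theorem permHom_apply (g : GG m n) : permHom g = g.perm := rfl

def diag (a : Fin n → ZMod m) : GG m n := ⟨1, a⟩

@[simp] theorem diag_perm (a : Fin n → ZMod m) : (diag a).perm = 1 := rfl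
@[simp] theorem diag_col (a : Fin n → ZMod m) : (diag a).col = a := rfl

theorem diag_add (a b : Fin n → ZMod m) : diag (a + b) = diag a * diag b := by
  ext <;> simp

def diagPair (x y : Fin n) (c : ZMod m) : GG m n := diag (Pi.single x c - Pi.single y c)

@[simp] theorem diagPair_perm (x y : Fin n) (c : ZMod m) : (diagPair x y c).perm = 1 := rfl
@[simp] theorem diagPair_col (x y : Fin n) (c : ZMod m) :
    (diagPair x y c).col = Pi.single x c - Pi.single y c := rfl

theorem diagPair_self (x : Fin n) (c : ZMod m) : diagPair x x c = 1 := by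
  ext <;> simp

def transpositionLike (x y : Fin n) (c : ZMod m) : GG m n :=
  ⟨Equiv.swap x y, Pi.single x c - Pi.single y c⟩

@[simp] theorem transpositionLike_perm (x y : Fin n) (c : ZMod m) :
    (transpositionLike x y c).perm = Equiv.swap x y := rfl
@[simp] theorem transpositionLike_col (x y : Fin n) (c : ZMod m) :
    (transpositionLike x y c).col = Pi.single x c - Pi.single y c := rfl

theorem transpositionLike_comm (x y : Fin n) (c : ZMod m) :
    transpositionLike y x (-c) = transpositionLike x y c := by
  ext w
  · simp [Equiv.swap_comm]
  · simp [Pi.single_apply]; split_ifs <;> simp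

theorem transpositionLike_mul_transpositionLike_mul_transpositionLike {x y z : Fin n}
    (hxy : x ≠ y) (hyz : y ≠ z) (hxz : x ≠ z) (c d : ZMod m) :
    transpositionLike y z d * transpositionLike x y c * transpositionLike y z d =
      transpositionLike x z (d + c) := by
  ext w
  · simp [Equiv.swap_apply_def]; split_ifs <;> simp_all
  · simp [Equiv.swap_apply_def, Pi.single_apply]; split_ifs <;> simp_all

theorem transpositionLike_mul_transpositionLike {x y : Fin n} (hxy : x ≠ y) (c d : ZMod m) :
    transpositionLike y x d * transpositionLike x y c = diagPair x y (d + c) := by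
  ext w
  · simp [Equiv.swap_apply_def]; split_ifs <;> simp_all
  · simp [Equiv.swap_apply_def, Pi.single_apply]; split_ifs <;> simp_all [add_comm]

theorem transpositionLike_mul_diagPair (x y : Fin n) (c d : ZMod m) :
    transpositionLike x y d * diagPair x y c = transpositionLike x y (d + c) := by
  ext w
  · simp
  · simp [Pi.single_apply]; split_ifs <;> simp_all [add_comm]

theorem diagPair_mul_transpositionLike {x y : Fin n} (hxy : x ≠ y) (c d : ZMod m) :
    diagPair y x d * transpositionLike x y c = transpositionLike x y (d + c) := by
  ext w
  · simp
  · simp [Equiv.swap_apply_def, Pi.single_apply]; split_ifs <;> simp_all [add_comm]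

theorem transpositionLike_smul {x y : Fin n} (hxy : x ≠ y) (c a : ZMod m) :
    transpositionLike x y c • (a, x) = (a + c, y) := by
  simp [smul_def, hxy]

theorem diagPair_smul {x y : Fin n} (hxy : x ≠ y) (c a : ZMod m) :
    diagPair x y c • (a, x) = (a + c, x) := by
  simp [smul_def, hxy]

theorem wt_diagPair (x y : Fin n) (c : ZMod m) : wt (diagPair x y c) = 0 := by
  simp [wt, Finset.sum_sub_distrib]

theorem wt_transpositionLike (x y : Fin n) (c : ZMod m) : wt (transpositionLike x y c) = 0 := by
  simp [wt, Finset.sum_sub_distrib]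

namespace IsTranspositionLike

variable {s : GG m n} (hs : IsTranspositionLike s)
include hs

theorem col_eq_zero {x : Fin n} (hx : s.perm x = x) : s.col x = 0 := by
  obtain ⟨i, j, hij, hperm, hzero, -⟩ := hs
  rw [hperm, Equiv.swap_apply_def] at hx
  exact hzero x (by grind) (by grind)

theorem eq_transpositionLike {x : Fin n} (hx : s.perm x ≠ x) :
    s = transpositionLike x (s.perm x) (s.col x) := by
  obtain ⟨i, j, hij, hperm, hzero, hsum⟩ := hs
  rw [hperm, Equiv.swap_apply_def] at hx ⊢
  ext w
  · simp [Equiv.swap_apply_def, hperm]; grind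
  · simp [Pi.single_apply]; grind

theorem wt_eq_zero : wt s = 0 := by
  obtain ⟨i, j, hij, hperm, -⟩ := id hs
  have hi : s.perm i ≠ i := by simp [hperm, hij.symm]
  rw [hs.eq_transpositionLike hi, wt_transpositionLike]

end IsTranspositionLike

theorem conj_diagPair (h : GG m n) (x y : Fin n) (c : ZMod m) :
    h * diagPair x y c * h⁻¹ = diagPair (h.perm x) (h.perm y) c := by
  ext w
  · simp
  · simp [Pi.single_apply, Equiv.symm_apply_eq]

def diagSubgroup (H : Subgroup (GG m n)) : AddSubgroup (Fin n → ZMod m) where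
  carrier := {a | diag a ∈ H}
  zero_mem' := H.one_mem
  add_mem' {a b} ha hb := by
    change diag (a + b) ∈ H
    rw [diag_add]
    exact H.mul_mem ha hb
  neg_mem' {a} ha := by
    change diag (-a) ∈ H
    rw [show diag (-a) = (diag a)⁻¹ by ext <;> simp]
    exact H.inv_mem ha

def diagShifts (H : Subgroup (GG m n)) : AddSubgroup (ZMod m) :=
  ⨅ x, ⨅ y, (diagSubgroup H).comap
    (AddMonoidHom.single (fun _ : Fin n => ZMod m) x -
      AddMonoidHom.single (fun _ : Fin n => ZMod m) y)

theorem mem_diagShifts {H : Subgroup (GG m n)} {c : ZMod m} :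
    c ∈ diagShifts H ↔ ∀ x y, diagPair x y c ∈ H := by
  simp only [diagShifts, AddSubgroup.mem_iInf, AddSubgroup.mem_comap]
  rfl

theorem mem_diagShifts_of_diagPair_mem {H : Subgroup (GG m n)}
    (hH : H.map permHom = ⊤) {x y : Fin n} (hxy : x ≠ y)
    {c : ZMod m} (hc : diagPair x y c ∈ H) : c ∈ diagShifts H := by
  refine mem_diagShifts.2 fun x' y' => ?_
  obtain rfl | hxy' := eq_or_ne x' y'
  · rw [diagPair_self]
    exact H.one_mem
  obtain ⟨u, hux, huy⟩ := Equiv.Perm.exists_apply_eq_and_apply_eq hxy hxy'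
  obtain ⟨h, hh, rfl⟩ : u ∈ H.map permHom := hH ▸ Subgroup.mem_top u
  rw [permHom_apply] at hux huy
  simpa only [conj_diagPair, hux, huy] using H.mul_mem (H.mul_mem hh hc) (H.inv_mem hh)

def Linked (H : Subgroup (GG m n)) (p q : ZMod m × Fin n) : Prop :=
  p.2 = q.2 ∧ q.1 - p.1 ∈ diagShifts H ∨
    p.2 ≠ q.2 ∧ transpositionLike p.2 q.2 (q.1 - p.1) ∈ H

namespace Linked

variable {H : Subgroup (GG m n)}

theorem refl (p : ZMod m × Fin n) : Linked H p p :=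
  Or.inl ⟨rfl, by simp⟩

theorem symm {p q : ZMod m × Fin n} : Linked H p q → Linked H q p := by
  rintro (⟨h, hc⟩ | ⟨h, ht⟩)
  · exact Or.inl ⟨h.symm, by simpa only [neg_sub] using neg_mem hc⟩
  · exact Or.inr ⟨h.symm, by rwa [← neg_sub, transpositionLike_comm]⟩

theorem trans (hH : H.map permHom = ⊤)
    {p q r : ZMod m × Fin n} (hpq : Linked H p q) (hqr : Linked H q r) : Linked H p r := by
  obtain ⟨a, x⟩ := p
  obtain ⟨b, y⟩ := q
  obtain ⟨c, z⟩ := r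
  have hac : c - a = (c - b) + (b - a) := (sub_add_sub_cancel c b a).symm
  rcases hpq with ⟨rfl, hpq⟩ | ⟨hxy, hpq⟩ <;> rcases hqr with ⟨rfl, hqr⟩ | ⟨hyz, hqr⟩
  · exact Or.inl ⟨rfl, hac ▸ add_mem hqr hpq⟩
  · refine Or.inr ⟨hyz, ?_⟩
    rw [hac, ← transpositionLike_mul_diagPair]
    exact H.mul_mem hqr (mem_diagShifts.1 hpq _ _)
  · refine Or.inr ⟨hxy, ?_⟩
    rw [hac, ← diagPair_mul_transpositionLike hxy]
    exact H.mul_mem (mem_diagShifts.1 hqr _ _) hpq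
  · obtain rfl | hxz := eq_or_ne x z
    · refine Or.inl ⟨rfl, mem_diagShifts_of_diagPair_mem hH hxy ?_⟩
      rw [hac, ← transpositionLike_mul_transpositionLike hxy]
      exact H.mul_mem hqr hpq
    · refine Or.inr ⟨hxz, ?_⟩
      rw [hac, ← transpositionLike_mul_transpositionLike_mul_transpositionLike hxy hyz hxz]
      exact H.mul_mem (H.mul_mem hqr hpq) hqr

theorem sub_mem_diagShifts {a b : ZMod m} {x : Fin n} (h : Linked H (a, x) (b, x)) :
    b - a ∈ diagShifts H :=
  h.elim And.right fun h => absurd rfl h.1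

end Linked

theorem linked_smul {H : Subgroup (GG m n)} {s : GG m n} (hs : IsTranspositionLike s)
    (hsH : s ∈ H) (p : ZMod m × Fin n) : Linked H p (s • p) := by
  by_cases hx : s.perm p.2 = p.2
  · simpa [smul_def, hx, hs.col_eq_zero hx] using Linked.refl (H := H) p
  · refine Or.inr ⟨Ne.symm hx, ?_⟩
    simpa [smul_def, ← hs.eq_transpositionLike hx] using hsH

theorem linked_smul_of_mem_closure {H : Subgroup (GG m n)}
    (hH : H.map permHom = ⊤) {S : Set (GG m n)}
    (hSH : S ⊆ H) (hS : ∀ s ∈ S, IsTranspositionLike s) {g : GG m n}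
    (hg : g ∈ Subgroup.closure S) (p : ZMod m × Fin n) : Linked H p (g • p) := by
  induction hg using Subgroup.closure_induction generalizing p with
  | mem s hs => exact linked_smul (hS s hs) (hSH hs) p
  | one => simpa using Linked.refl p
  | mul g h _ _ ihg ihh => simpa [mul_smul] using (ihh p).trans hH (ihg (h • p))
  | inv g _ ih => simpa using (ih (g⁻¹ • p)).symm

theorem map_permHom_closure_eq_top {S : Set (GG m n)} (hS : ∀ s ∈ S, IsTranspositionLike s)
    (htr : ∀ x y : Fin n, ∃ g ∈ Subgroup.closure S, g.perm x = y) :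
    (Subgroup.closure S).map permHom = ⊤ := by
  have hswap : ∀ f ∈ permHom '' S, f.IsSwap := by
    rintro _ ⟨s, hs, rfl⟩
    obtain ⟨i, j, hij, hperm, -⟩ := hS s hs
    exact ⟨i, j, hij, hperm⟩
  rw [MonoidHom.map_closure, eq_top_iff, ← Equiv.Perm.closure_isSwap, Subgroup.closure_le]
  rintro _ ⟨x, y, -, rfl⟩
  refine (swap_mem_closure_isSwap hswap).2 ?_
  obtain ⟨g, hg, hgx⟩ := htr y x
  rw [← MonoidHom.map_closure]
  exact ⟨⟨permHom g, g, hg, rfl⟩, hgx⟩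

theorem Gmpn_le_of_diagShifts_eq_top {H : Subgroup (GG m n)}
    (hH : H.map permHom = ⊤) (hD : diagShifts H = ⊤)
    (hHG : H ≤ Gmpn m m n) : Gmpn m m n ≤ H := by
  intro g hg
  obtain ⟨h, hh, hperm⟩ : g.perm ∈ H.map permHom := hH ▸ Subgroup.mem_top _
  rw [permHom_apply] at hperm
  have hdiag : g * h⁻¹ = diag (g * h⁻¹).col := by ext <;> simp [hperm]
  have hwt : ∑ i, (g * h⁻¹).col i = 0 := by
    change wt (g * h⁻¹) = 0
    rw [wt_mul, wt_inv, mem_Gmpn_self_iff.1 hg, mem_Gmpn_self_iff.1 (hHG hh), neg_zero, add_zero]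
  have hgh : g * h⁻¹ ∈ H := by
    rw [hdiag]
    refine AddSubgroup.pi_mem_of_sum_eq_zero (A := diagSubgroup H) (fun x y c => ?_) hwt
    exact mem_diagShifts.1 (hD ▸ AddSubgroup.mem_top c) x y
  simpa using H.mul_mem hgh hh

theorem exists_mem_Gmpn_smul_eq (hn : 2 ≤ n) (p q : ZMod m × Fin n) :
    ∃ g ∈ Gmpn m m n, g • p = q := by
  obtain ⟨a, x⟩ := p
  obtain ⟨b, y⟩ := q
  obtain rfl | hxy := eq_or_ne x y
  · have : Nontrivial (Fin n) := Fin.nontrivial_iff_two_le.2 hn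
    obtain ⟨z, hz⟩ := exists_ne x
    refine ⟨diagPair x z (b - a), mem_Gmpn_self_iff.2 (wt_diagPair _ _ _), ?_⟩
    rw [diagPair_smul hz.symm, add_sub_cancel]
  · refine ⟨transpositionLike x y (b - a), mem_Gmpn_self_iff.2 (wt_transpositionLike _ _ _), ?_⟩
    rw [transpositionLike_smul hxy, add_sub_cancel]

end GG

theorem closure_eq_Gmmn_iff_transitive_general (m n : ℕ) (hn : 2 ≤ n)
    (S : Set (GG m n)) (hS : ∀ s ∈ S, GG.IsRefl m s) :
    Subgroup.closure S = GG.Gmpn m m n ↔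
      ∀ x y : ZMod m × Fin n,
        ∃ g ∈ Subgroup.closure S, (x.1 + g.col x.2, g.perm x.2) = y := by
  simp only [← GG.smul_def]
  have hT : ∀ s ∈ S, GG.IsTranspositionLike s :=
    fun s hs => (hS s hs).resolve_right (GG.not_isDiagonalRefl_self s)
  have hle : Subgroup.closure S ≤ GG.Gmpn m m n :=
    (Subgroup.closure_le _).2 fun s hs => GG.mem_Gmpn_self_iff.2 (hT s hs).wt_eq_zero
  refine ⟨fun h => h ▸ GG.exists_mem_Gmpn_smul_eq hn, fun htr => le_antisymm hle ?_⟩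
  have hperm := GG.map_permHom_closure_eq_top hT fun x y =>
    let ⟨g, hg, hgy⟩ := htr (0, x) (0, y)
    ⟨g, hg, congrArg Prod.snd hgy⟩
  refine GG.Gmpn_le_of_diagShifts_eq_top hperm (eq_top_iff.2 fun c _ => ?_) hle
  let x₀ : Fin n := ⟨0, by omega⟩
  obtain ⟨g, hg, hgx⟩ := htr (0, x₀) (c, x₀)
  have := GG.linked_smul_of_mem_closure hperm Subgroup.subset_closure hT hg (0, x₀)
  rw [hgx] at this
  simpa using this.sub_mem_diagShifts

/-- A set `S` of reflections of `G(m,m,n)` generates `G(m,m,n)` if and only if the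
subgroup it generates acts transitively on `(ℤ/mℤ) × Fin n`, where `G(m,1,n)` acts by
`[u; a]·(c, j) = (c + a_j, u(j))`. -/
theorem closure_eq_Gmmn_iff_transitive (m n : ℕ) (hm : 1 ≤ m) (hn : 2 ≤ n)
    (S : Set (GG m n)) (hS : ∀ s ∈ S, GG.IsRefl m s) :
    Subgroup.closure S = GG.Gmpn m m n ↔
      ∀ x y : ZMod m × Fin n,
        ∃ g ∈ Subgroup.closure S, (x.1 + g.col x.2, g.perm x.2) = y :=
  closure_eq_Gmmn_iff_transitive_general m n hn S hS
end

section
/- Let S be a set of reflections of G(m,p,n). Then S generates G(m,p,n) if and only if both of the following hold: the set wt(S) = {wt(s) : s ∈ S} generates the subgroup pℤ/mℤ of ℤ/mℤ, and the set π_{m/p}(S) generates G(p,p,n). -/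
/- Both conditions are necessary because `wt` and `π_{m/p}` are homomorphisms, the colours of
`G(m,p,n)` fill out `pℤ/mℤ` (as `n > 0`), and `π_{m/p}` maps `G(m,p,n)` onto `G(p,p,n)`.
Conversely let `H = ⟨S⟩ ≤ G(m,p,n)`. Since `π_{m/p}(H) = π_{m/p}(G(m,p,n))`, it suffices that
`H` contains `ker π_{m/p}`, the diagonal elements `[id; a]` with every `a_i ∈ pℤ/mℤ`.
Because `π_{m/p}(H)` contains every permutation, `H` moves any coordinate to any other, so
conjugating the diagonal reflections in `S` puts each colour `wt(s)` on every coordinate; these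
colours generate `pℤ/mℤ`, hence `H ⊇ ker π_{m/p}`. -/

theorem ZMod.mem_zmultiples_iff_castHom_eq_zero {m p : ℕ} (hpm : p ∣ m) (x : ZMod m) :
    x ∈ AddSubgroup.zmultiples (p : ZMod m) ↔ ZMod.castHom hpm (ZMod p) x = 0 := by
  constructor
  · rintro ⟨t, rfl⟩
    rw [map_zsmul, map_natCast, ZMod.natCast_self, smul_zero]
  · intro hx
    obtain ⟨k, rfl⟩ := ZMod.intCast_surjective x
    rw [map_intCast, ZMod.intCast_zmod_eq_zero_iff_dvd] at hx
    obtain ⟨t, rfl⟩ := hx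
    exact ⟨t, by push_cast; ring⟩

namespace GG

open AddSubgroup

variable {m n : ℕ}

theorem wt_eq_zero_of_isTranspositionLike {g : GG m n} (hg : IsTranspositionLike g) :
    wt g = 0 := by
  obtain ⟨i, j, hij, -, hzero, hsum⟩ := hg
  rw [wt, Fintype.sum_eq_add i j hij fun l hl => hzero l hl.1 hl.2, hsum]

theorem wt_eq_col_of_forall_ne {g : GG m n} {i : Fin n} (hzero : ∀ l, l ≠ i → g.col l = 0) :
    wt g = g.col i :=
  Fintype.sum_eq_single i hzero

theorem mem_Gmpn {p : ℕ} {g : GG m n} : g ∈ Gmpn m p n ↔ wt g ∈ zmultiples (p : ZMod m) :=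
  ⟨fun h => h.2, fun h => ⟨fun _ => mem_top _, h⟩⟩

theorem IsRefl.mem_Gmpn {p : ℕ} {g : GG m n} (hg : IsRefl p g) : g ∈ Gmpn m p n := by
  rcases hg with hg | ⟨-, i, -, hi, hzero⟩
  · rw [GG.mem_Gmpn, wt_eq_zero_of_isTranspositionLike hg]
    exact zero_mem _
  · rwa [GG.mem_Gmpn, wt_eq_col_of_forall_ne hzero]

theorem wt_single (i : Fin n) (c : ZMod m) : wt (⟨1, Pi.single i c⟩ : GG m n) = c :=
  Fintype.sum_pi_single' i c

theorem le_of_Gsub_top_le_Gsub_top (hn : 0 < n) {B B' : AddSubgroup (ZMod m)}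
    (h : Gsub m n ⊤ B ≤ Gsub m n ⊤ B') : B ≤ B' := by
  intro c hc
  have hmem : (⟨1, Pi.single ⟨0, hn⟩ c⟩ : GG m n) ∈ Gsub m n ⊤ B :=
    ⟨fun _ => mem_top _, by rwa [wt_single]⟩
  simpa only [wt_single] using (h hmem).2

theorem closure_le_Gsub_closure_wt (S : Set (GG m n)) :
    Subgroup.closure S ≤ Gsub m n ⊤ (closure (wt '' S)) :=
  (Subgroup.closure_le _).mpr fun s hs => ⟨fun _ => mem_top _, subset_closure ⟨s, hs, rfl⟩⟩

theorem mul_single_mul_inv (h : GG m n) (i : Fin n) (c : ZMod m) :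
    h * ⟨1, Pi.single i c⟩ * h⁻¹ = ⟨1, Pi.single (h.perm i) c⟩ := by
  ext l
  · simp
  · simp [Pi.single_apply, Equiv.symm_apply_eq]

section Projection

variable {p : ℕ} (hpm : p ∣ m)

def piHom : GG m n →* GG p n where
  toFun := pimap p hpm
  map_one' := GG.ext rfl (funext fun _ => map_zero _)
  map_mul' _ _ := GG.ext rfl (funext fun _ => map_add _ _ _)

@[simp] theorem piHom_perm (g : GG m n) : (piHom hpm g).perm = g.perm := rfl

@[simp] theorem piHom_col (g : GG m n) (i : Fin n) :
    (piHom hpm g).col i = ZMod.castHom hpm (ZMod p) (g.col i) := rfl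

theorem wt_piHom (g : GG m n) : wt (piHom hpm g) = ZMod.castHom hpm (ZMod p) (wt g) := by
  simp [wt]

theorem piHom_surjective : Function.Surjective (piHom (n := n) hpm) := by
  intro k
  refine ⟨⟨k.perm, fun i => Function.surjInv (ZMod.castHom_surjective hpm) (k.col i)⟩, ?_⟩
  ext i
  · rfl
  · exact Function.surjInv_eq (ZMod.castHom_surjective hpm) _

theorem mem_Gmpn_self {k : GG p n} : k ∈ Gmpn p p n ↔ wt k = 0 := by
  rw [GG.mem_Gmpn, ZMod.natCast_self, zmultiples_zero_eq_bot, mem_bot]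

theorem Gmpn_eq_comap_piHom : Gmpn m p n = (Gmpn p p n).comap (piHom hpm) := by
  ext g
  rw [Subgroup.mem_comap, mem_Gmpn_self, wt_piHom, GG.mem_Gmpn,
    ZMod.mem_zmultiples_iff_castHom_eq_zero hpm]

theorem map_piHom_Gmpn : (Gmpn m p n).map (piHom hpm) = Gmpn p p n := by
  rw [Gmpn_eq_comap_piHom hpm, Subgroup.map_comap_eq_self_of_surjective (piHom_surjective hpm)]

theorem ker_piHom_le_Gmpn : (piHom (n := n) hpm).ker ≤ Gmpn m p n := by
  rw [Gmpn_eq_comap_piHom hpm]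
  exact Subgroup.ker_le_comap _ _

theorem mem_ker_piHom {g : GG m n} :
    g ∈ (piHom hpm).ker ↔ g.perm = 1 ∧ ∀ i, g.col i ∈ zmultiples (p : ZMod m) := by
  simp only [MonoidHom.mem_ker, GG.ext_iff, piHom_perm, one_perm, funext_iff, piHom_col,
    one_col, Pi.zero_apply, ZMod.mem_zmultiples_iff_castHom_eq_zero hpm]

theorem exists_mem_perm_apply_eq {H : Subgroup (GG m n)} (hH : H.map (piHom hpm) = Gmpn p p n)
    (i j : Fin n) : ∃ h ∈ H, h.perm i = j := by
  have hswap : (⟨Equiv.swap i j, 0⟩ : GG p n) ∈ H.map (piHom hpm) := by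
    rw [hH, mem_Gmpn_self]
    exact Finset.sum_const_zero
  obtain ⟨h, hh, hπ⟩ := hswap
  refine ⟨h, hh, ?_⟩
  rw [← piHom_perm hpm, hπ, Equiv.swap_apply_left]

theorem eq_Gmpn_of_map_piHom_eq_of_ker_le {H : Subgroup (GG m n)}
    (hH : H.map (piHom hpm) = Gmpn p p n) (hker : (piHom hpm).ker ≤ H) : H = Gmpn m p n := by
  rwa [← map_piHom_Gmpn hpm, Subgroup.map_eq_map_iff, sup_eq_left.mpr hker,
    sup_eq_left.mpr (ker_piHom_le_Gmpn hpm)] at hH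

end Projection

section Diagonal

def diagColors (H : Subgroup (GG m n)) : AddSubgroup (Fin n → ZMod m) where
  carrier := {a | (⟨1, a⟩ : GG m n) ∈ H}
  zero_mem' := H.one_mem
  add_mem' ha hb := H.mul_mem ha hb
  neg_mem' ha := H.inv_mem ha

theorem mem_diagColors {H : Subgroup (GG m n)} {a : Fin n → ZMod m} :
    a ∈ diagColors H ↔ (⟨1, a⟩ : GG m n) ∈ H := Iff.rfl

theorem single_wt_mem_diagColors {p : ℕ} {H : Subgroup (GG m n)}
    (htrans : ∀ i j, ∃ h ∈ H, h.perm i = j) {s : GG m n} (hs : s ∈ H) (hrefl : IsRefl p s)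
    (j : Fin n) : Pi.single j (wt s) ∈ diagColors H := by
  rcases hrefl with htl | ⟨hperm, i, -, -, hzero⟩
  · rw [wt_eq_zero_of_isTranspositionLike htl, Pi.single_zero]
    exact zero_mem _
  · have hs_eq : s = ⟨1, Pi.single i (s.col i)⟩ := by
      ext l
      · rw [hperm]
      · rcases eq_or_ne l i with rfl | hl
        · simp
        · simp [hzero l hl, hl]
    obtain ⟨h, hh, rfl⟩ := htrans i j
    rw [mem_diagColors, wt_eq_col_of_forall_ne hzero, ← mul_single_mul_inv, ← hs_eq]
    exact H.mul_mem (H.mul_mem hh hs) (H.inv_mem hh)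

theorem ker_piHom_le_closure {p : ℕ} (hpm : p ∣ m) {S : Set (GG m n)}
    (hS : ∀ s ∈ S, IsRefl p s) (hwt : AddSubgroup.closure (wt '' S) = zmultiples (p : ZMod m))
    (htrans : ∀ i j, ∃ h ∈ Subgroup.closure S, h.perm i = j) :
    (piHom hpm).ker ≤ Subgroup.closure S := by
  have hsingle (j : Fin n) : zmultiples (p : ZMod m) ≤
      (diagColors (Subgroup.closure S)).comap (AddMonoidHom.single _ j) := by
    rw [← hwt, closure_le]
    rintro _ ⟨s, hs, rfl⟩
    exact single_wt_mem_diagColors htrans (Subgroup.subset_closure hs) (hS s hs) j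
  intro g hg
  obtain ⟨hperm, hcol⟩ := (mem_ker_piHom hpm).mp hg
  have hdiag : g.col ∈ diagColors (Subgroup.closure S) :=
    pi_mem_of_single_mem _ fun j => hsingle j (hcol j)
  rwa [mem_diagColors, ← hperm] at hdiag

end Diagonal

end GG

theorem closure_eq_Gmpn_iff_general (m p n : ℕ) (hn : 0 < n)
    (hpm : p ∣ m) (S : Set (GG m n)) (hS : ∀ s ∈ S, GG.IsRefl p s) :
    Subgroup.closure S = GG.Gmpn m p n ↔
      (AddSubgroup.closure (GG.wt '' S) = AddSubgroup.zmultiples ((p : ZMod m)) ∧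
        Subgroup.closure (GG.pimap p hpm '' S) = GG.Gmpn p p n) := by
  have hmap : (Subgroup.closure S).map (GG.piHom hpm) = Subgroup.closure (GG.pimap p hpm '' S) :=
    MonoidHom.map_closure _ _
  constructor
  · intro h
    refine ⟨le_antisymm ?_ ?_, by rw [← hmap, h, GG.map_piHom_Gmpn]⟩
    · exact (AddSubgroup.closure_le _).mpr fun _ ⟨s, hs, hw⟩ => hw ▸ (hS s hs).mem_Gmpn.2
    · exact GG.le_of_Gsub_top_le_Gsub_top hn (h.ge.trans (GG.closure_le_Gsub_closure_wt S))
  · rintro ⟨hwt, hpi⟩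
    rw [← hmap] at hpi
    exact GG.eq_Gmpn_of_map_piHom_eq_of_ker_le hpm hpi
      (GG.ker_piHom_le_closure hpm hS hwt (GG.exists_mem_perm_apply_eq hpm hpi))

/-- A set `S` of reflections of `G(m,p,n)` generates `G(m,p,n)` if and only if
`wt(S)` generates the subgroup `pℤ/mℤ` of `ℤ/mℤ` and `π_{m/p}(S)` generates `G(p,p,n)`. -/
theorem closure_eq_Gmpn_iff (m p n : ℕ) (hm : 0 < m) (hp : 0 < p) (hn : 0 < n)
    (hpm : p ∣ m) (S : Set (GG m n)) (hS : ∀ s ∈ S, GG.IsRefl p s) :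
    Subgroup.closure S = GG.Gmpn m p n ↔
      (AddSubgroup.closure (GG.wt '' S) = AddSubgroup.zmultiples ((p : ZMod m)) ∧
        Subgroup.closure (GG.pimap p hpm '' S) = GG.Gmpn p p n) :=
  closure_eq_Gmpn_iff_general m p n hn hpm S hS
end

section
/- Let m ≥ 2 and let g ∈ ℤ/mℤ. For every N ≥ 0, the number of N-tuples (x_1, …, x_N) of nonzero elements of ℤ/mℤ with x_1 + ⋯ + x_N = g such that {x_1, …, x_N} generates the group ℤ/mℤ equals ∑_{r} μ(m/r) · ((r−1)^N − (−1)^N)/r, where the sum is over all divisors r of m that are divisible by the additive order of g, μ is the number-theoretic Möbius function, and (r−1)^N is interpreted with 0^0 = 1. -/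
/-!
The number `a_N(h)` of `N`-tuples of nonzero elements with sum `h` in a group of order `n`
satisfies `a_{N+1}(h) = ∑_{y ≠ 0} a_N(h - y)`, whose solution is
`((n - 1)^N - (-1)^N) / n + [h = 0] (-1)^N`.
In a cyclic group of order `m`, the subgroup generated by a tuple lies in the `n`-torsion
subgroup (which has order `n` for `n ∣ m`) iff its order divides `n`. Sorting the tuples of
nonzero `n`-torsion elements with sum `g` by the order of the subgroup they generate therefore
expresses `a` on the `n`-torsion as a divisor sum of the generating counts, and Möbius inversion
recovers the count of generating tuples. The terms `[g = 0] (-1)^N` cancel because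
`∑_{d ∣ m} μ d = 0` for `m ≠ 1`.
-/

open Finset ArithmeticFunction
open scoped ArithmeticFunction.Moebius

lemma sum_divisors_moebius_eq_zero {n : ℕ} (hn : n ≠ 1) : ∑ d ∈ n.divisors, μ d = 0 := by
  rw [← coe_mul_zeta_apply, moebius_mul_coe_zeta, one_apply_ne hn]

variable {G : Type*} [AddCommGroup G]

section Counting

variable [Fintype G] [DecidableEq G]

lemma card_tuples_sum_eq_succ (S : Finset G) (N : ℕ) (h : G) :
    #{x : Fin (N + 1) → G | (∀ i, x i ∈ S) ∧ ∑ i, x i = h} =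
      ∑ y ∈ S, #{x : Fin N → G | (∀ i, x i ∈ S) ∧ ∑ i, x i = h - y} := by
  rw [card_eq_sum_card_fiberwise (f := fun x => x 0) (t := S) fun x hx => (mem_filter.1 hx).2.1 0]
  refine sum_congr rfl fun y hy => card_nbij' Fin.tail (fun x => Fin.cons y x) ?_ ?_ ?_ ?_
  · intro x hx
    simp only [filter_filter, coe_filter, mem_univ, true_and, Set.mem_ofPred_eq] at hx ⊢
    obtain ⟨⟨hS, hsum⟩, rfl⟩ := hx
    refine ⟨fun i => hS i.succ, ?_⟩
    rw [← hsum, Fin.sum_univ_succ]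
    simp [Fin.tail]
  · intro x hx
    simp only [filter_filter, coe_filter, mem_univ, true_and, Set.mem_ofPred_eq] at hx ⊢
    refine ⟨⟨Fin.cases hy hx.1, ?_⟩, rfl⟩
    rw [Fin.sum_univ_succ]
    simp [hx.2]
  · intro x hx
    simp only [filter_filter, coe_filter, mem_univ, true_and, Set.mem_ofPred_eq] at hx
    simp only [← hx.2, Fin.cons_self_tail]
  · intro x _
    exact Fin.tail_cons _ _

lemma card_filter_mem_ne_zero (H : AddSubgroup G) [DecidablePred (· ∈ H)] :
    #{y : G | y ∈ H ∧ y ≠ 0} = Nat.card H - 1 := by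
  rw [← filter_filter, filter_ne', card_erase_of_mem (by simp [H.zero_mem]),
    Nat.card_eq_fintype_card, Fintype.card_subtype]

lemma card_nonzero_tuples_sum_of_mem (H : AddSubgroup G) [DecidablePred (· ∈ H)] (N : ℕ)
    {h : G} (hh : h ∈ H) :
    (#{x : Fin N → G | (∀ i, x i ∈ H ∧ x i ≠ 0) ∧ ∑ i, x i = h} : ℚ) =
      (((Nat.card H : ℚ) - 1) ^ N - (-1) ^ N) / Nat.card H + if h = 0 then (-1) ^ N else 0 := by
  set S : Finset G := {y | y ∈ H ∧ y ≠ 0}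
  have hS (y : G) : y ∈ S ↔ y ∈ H ∧ y ≠ 0 := by simp [S]
  have hcard : (#S : ℚ) = Nat.card H - 1 := by
    rw [card_filter_mem_ne_zero, Nat.cast_sub Nat.card_pos, Nat.cast_one]
  have hn : (Nat.card H : ℚ) ≠ 0 := by exact_mod_cast Nat.card_pos.ne'
  simp only [← hS]
  induction N generalizing h with
  | zero => simp [eq_comm]; split_ifs <;> simp
  | succ N ih =>
    rw [card_tuples_sum_eq_succ, Nat.cast_sum,
      sum_congr rfl fun y hy => ih (H.sub_mem hh ((hS y).1 hy).1)]
    simp only [sub_eq_zero, sum_add_distrib, sum_const, nsmul_eq_mul, hcard, sum_ite_eq, hS, hh,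
      ne_eq, true_and]
    split_ifs <;> field_simp <;> ring

lemma card_nonzero_tuples_sum_of_notMem (H : AddSubgroup G) [DecidablePred (· ∈ H)] (N : ℕ)
    {h : G} (hh : h ∉ H) :
    #{x : Fin N → G | (∀ i, x i ∈ H ∧ x i ≠ 0) ∧ ∑ i, x i = h} = 0 := by
  rw [card_eq_zero, filter_eq_empty_iff]
  rintro x - ⟨hx, rfl⟩
  exact hh (sum_mem fun i _ => (hx i).1)

end Counting

section Cyclic

variable [IsAddCyclic G]

lemma card_closure_range_dvd_iff {ι : Type*} (x : ι → G) (n : ℕ) :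
    Nat.card (AddSubgroup.closure (Set.range x)) ∣ n ↔ ∀ i, n • x i = 0 := by
  rw [← IsAddCyclic.exponent_eq_card, AddMonoid.exponent_dvd_iff_forall_nsmul_eq_zero]
  have hker : AddSubgroup.closure (Set.range x) ≤ (nsmulAddMonoidHom n : G →+ G).ker ↔
      ∀ i, n • x i = 0 := by
    simp [AddSubgroup.closure_le, Set.range_subset_iff]
  rw [← hker, SetLike.le_def, Subtype.forall]
  simp

lemma sum_card_filter_card_closure_eq [DecidableEq G] {N : ℕ} (s : Finset (Fin N → G)) {n : ℕ}
    (hn : n ≠ 0) :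
    ∑ d ∈ n.divisors, #{x ∈ s | Nat.card (AddSubgroup.closure (Set.range x)) = d} =
      #{x ∈ s | ∀ i, n • x i = 0} := by
  rw [card_eq_sum_card_fiberwise (f := fun x => Nat.card (AddSubgroup.closure (Set.range x)))
    (t := n.divisors) fun x hx => ?_]
  · refine sum_congr rfl fun d hd => ?_
    rw [filter_filter]
    refine congrArg card (filter_congr fun x _ => (and_iff_right_of_imp ?_).symm)
    rintro rfl
    exact (card_closure_range_dvd_iff x n).1 (Nat.dvd_of_mem_divisors hd)
  · exact Nat.mem_divisors.2 ⟨(card_closure_range_dvd_iff x n).2 (mem_filter.1 hx).2, hn⟩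

lemma card_nonzero_torsion_tuples_sum [Fintype G] [DecidableEq G] (N : ℕ) (g : G) {n : ℕ}
    (hn : n ∣ Nat.card G) :
    (#{x : Fin N → G | (∀ i, n • x i = 0 ∧ x i ≠ 0) ∧ ∑ i, x i = g} : ℚ) =
      if addOrderOf g ∣ n then
        (((n : ℚ) - 1) ^ N - (-1) ^ N) / n + (if g = 0 then (-1) ^ N else 0)
      else 0 := by
  set H := (nsmulAddMonoidHom n : G →+ G).ker
  have hmem (y : G) : y ∈ H ↔ n • y = 0 := by simp [H]
  have hcard : Nat.card H = n := by
    rw [IsAddCyclic.card_nsmulAddMonoidHom_ker, Nat.gcd_eq_right hn]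
  simp only [← hmem]
  by_cases hg : addOrderOf g ∣ n
  · rw [if_pos hg, card_nonzero_tuples_sum_of_mem H N
      ((hmem g).2 (addOrderOf_dvd_iff_nsmul_eq_zero.1 hg)), hcard]
  · rw [if_neg hg, card_nonzero_tuples_sum_of_notMem H N
      fun hgH => hg (addOrderOf_dvd_of_nsmul_eq_zero ((hmem g).1 hgH)), Nat.cast_zero]

theorem card_generating_nonzero_tuples_sum [Finite G] (hG : Nat.card G ≠ 1) (g : G) (N : ℕ) :
    (Nat.card {x : Fin N → G // (∀ i, x i ≠ 0) ∧ ∑ i, x i = g ∧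
        AddSubgroup.closure (Set.range x) = ⊤} : ℚ) =
      ∑ r ∈ (Nat.card G).divisors with addOrderOf g ∣ r,
        ((μ (Nat.card G / r) : ℤ) : ℚ) * (((r : ℚ) - 1) ^ N - (-1) ^ N) / r := by
  classical
  have := Fintype.ofFinite G
  set m := Nat.card G
  set s : Finset (Fin N → G) := {x | (∀ i, x i ≠ 0) ∧ ∑ i, x i = g}
  let gen (d : ℕ) : ℚ := #{x ∈ s | Nat.card (AddSubgroup.closure (Set.range x)) = d}
  let torsion (n : ℕ) : ℚ := #{x ∈ s | ∀ i, n • x i = 0}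
  have hinv : ∑ x ∈ m.divisorsAntidiagonal, μ x.1 • torsion x.2 = gen m :=
    (sum_eq_iff_sum_smul_moebius_eq_on {n | n ∣ m} fun _ _ => dvd_trans).1
      (fun n hn _ => by
        simp only [gen, torsion]
        exact_mod_cast sum_card_filter_card_closure_eq s hn.ne')
      m Nat.card_pos dvd_rfl
  have hgen : gen m = Nat.card {x : Fin N → G // (∀ i, x i ≠ 0) ∧ ∑ i, x i = g ∧
      AddSubgroup.closure (Set.range x) = ⊤} := by
    rw [Nat.card_eq_fintype_card, Fintype.card_subtype]
    simp only [gen, s, filter_filter, m, AddSubgroup.card_eq_iff_eq_top, and_assoc]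
  have htorsion (n : ℕ) (hn : n ∣ m) : torsion n = if addOrderOf g ∣ n then
      (((n : ℚ) - 1) ^ N - (-1) ^ N) / n + (if g = 0 then (-1) ^ N else 0) else 0 := by
    rw [← card_nonzero_torsion_tuples_sum N g hn]
    simp only [torsion, s, filter_filter, forall_and]
    congr 3
    ext x
    tauto
  have hvanish : (if g = 0 then (-1 : ℚ) ^ N else 0) *
      ∑ r ∈ m.divisors with addOrderOf g ∣ r, ((μ (m / r) : ℤ) : ℚ) = 0 := by
    rcases eq_or_ne g 0 with rfl | hg
    · rw [addOrderOf_zero, filter_true_of_mem fun _ _ => one_dvd _,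
        Nat.sum_div_divisors m fun k => ((μ k : ℤ) : ℚ), ← Int.cast_sum,
        sum_divisors_moebius_eq_zero hG, Int.cast_zero, mul_zero]
    · rw [if_neg hg, zero_mul]
  rw [← hgen, ← hinv, Nat.sum_divisorsAntidiagonal' fun a b => μ a • torsion b,
    sum_congr rfl fun b hb => by rw [htorsion b (Nat.dvd_of_mem_divisors hb)]]
  simp only [smul_ite, smul_zero, ← sum_filter, zsmul_eq_mul, mul_add, sum_add_distrib, ← sum_mul]
  rw [mul_comm, hvanish, add_zero]
  exact sum_congr rfl fun _ _ => (mul_div_assoc _ _ _).symm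

end Cyclic

/-- Counting full reflection factorizations in the cyclic group `G(m,1,1) ≅ ℤ/mℤ`: the
number of `N`-tuples of nonzero elements of `ℤ/mℤ` with sum `g` that generate `ℤ/mℤ` is
`∑_{r} μ(m/r) · ((r−1)^N − (−1)^N)/r`, the sum being over divisors `r` of `m` divisible
by the additive order of `g`. -/
theorem cyclic_full_factorization_count (m : ℕ) (hm : 2 ≤ m) (g : ZMod m) (N : ℕ) :
    (Nat.card {x : Fin N → ZMod m // (∀ i, x i ≠ 0) ∧ ∑ i, x i = g ∧
        AddSubgroup.closure (Set.range x) = ⊤} : ℚ) =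
      ∑ r ∈ Finset.filter (fun r => addOrderOf g ∣ r) (Nat.divisors m),
        ((ArithmeticFunction.moebius (m / r) : ℤ) : ℚ) *
          (((r : ℚ) - 1) ^ N - (-1 : ℚ) ^ N) / (r : ℚ) := by
  have : NeZero m := ⟨by omega⟩
  have h := card_generating_nonzero_tuples_sum (G := ZMod m) (by rw [Nat.card_zmod]; omega) g N
  rwa [Nat.card_zmod] at h
end

section
/- Let N and R be positive integers with R ∣ N, and let g ∈ ℤ/Nℤ have additive order N/R. Then the number of pairs (x, y) ∈ (ℤ/Nℤ) × (ℤ/Nℤ) with x + y = g such that {x, y} generates the group ℤ/Nℤ equals (N/R) · φ(R), where φ is Euler's totient function. -/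
/-!
Let `π : ℤ/Nℤ → ℤ/Rℤ` be reduction. Its kernel has order `N/R` and contains `g` (as `(N/R)•g = 0`
forces `R ∣ g`), so it is the subgroup generated by `g`. A pair with `x + y = g` is determined by
`x` and generates the same subgroup as `{x, g}`; since that subgroup contains `ker π`, it is the
whole group exactly when `π x` generates `ℤ/Rℤ`. There are `φ(R)` such generators, each with a
fibre of size `N/R`.
-/

open Function AddSubgroup

namespace AddMonoidHom

variable {G H : Type*} [AddGroup G] [AddGroup H] {f : G →+ H}

theorem card_subtype_comp_eq_mul_card_ker (hf : Surjective f) (q : H → Prop) :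
    Nat.card {x // q (f x)} = Nat.card {y // q y} * Nat.card f.ker := by
  rw [← Nat.card_prod]
  exact Nat.card_congr <| (Equiv.sigmaSubtypeFiberEquivSubtype f fun _ => Iff.rfl).symm.trans <|
    (Equiv.sigmaCongrRight fun y : Subtype q =>
      (fiberEquivKerOfSurjective hf y : {x // f x = y} ≃ f.ker)).trans (Equiv.sigmaEquivProd _ _)

theorem card_ker_of_surjective [Finite H] (hf : Surjective f) :
    Nat.card f.ker = Nat.card G / Nat.card H := by
  rw [← f.ker.card_mul_index, AddSubgroup.index_ker, range_eq_top.mpr hf, AddSubgroup.card_top,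
    Nat.mul_div_cancel _ Nat.card_pos]

theorem eq_top_iff_map_eq_top (hf : Surjective f) {K : AddSubgroup G} (hK : f.ker ≤ K) :
    K = ⊤ ↔ K.map f = ⊤ := by
  refine ⟨fun h => h ▸ AddSubgroup.map_top_of_surjective f hf, fun h => ?_⟩
  rw [← AddSubgroup.comap_map_eq_self hK, h, AddSubgroup.comap_top]

theorem closure_pair_eq_top_iff (hf : Surjective f) {g : G} (hg : f.ker = zmultiples g) (x : G) :
    closure {x, g} = ⊤ ↔ zmultiples (f x) = ⊤ := by
  have hg0 : f g = 0 := by rw [← mem_ker, hg]; exact mem_zmultiples g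
  have hker : f.ker ≤ closure {x, g} := by
    rw [hg, zmultiples_le]
    exact subset_closure (Set.mem_insert_of_mem _ rfl)
  rw [eq_top_iff_map_eq_top hf hker, AddMonoidHom.map_closure, Set.image_pair, hg0, Set.pair_comm,
    closure_insert_zero, zmultiples_eq_closure]

end AddMonoidHom

theorem AddSubgroup.zmultiples_eq_top_iff_addOrderOf_eq {G : Type*} [AddGroup G] [Finite G]
    (a : G) : zmultiples a = ⊤ ↔ addOrderOf a = Nat.card G :=
  ⟨addOrderOf_eq_card_of_zmultiples_eq_top,
    fun h => eq_top_of_card_eq _ (by rw [Nat.card_zmultiples, h])⟩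

theorem IsAddCyclic.card_zmultiples_eq_top {G : Type*} [AddGroup G] [IsAddCyclic G] [Finite G] :
    Nat.card {a : G // zmultiples a = ⊤} = (Nat.card G).totient := by
  classical
  have := Fintype.ofFinite G
  simp_rw [zmultiples_eq_top_iff_addOrderOf_eq, Nat.card_eq_fintype_card, Fintype.card_subtype]
  exact IsAddCyclic.card_addOrderOf_eq_totient dvd_rfl

theorem AddSubgroup.closure_pair_sub_right {G : Type*} [AddGroup G] (x g : G) :
    closure {x, g - x} = closure {x, g} := by
  apply le_antisymm <;> rw [closure_le, Set.insert_subset_iff, Set.singleton_subset_iff]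
  · exact ⟨subset_closure (by simp), sub_mem (subset_closure (by simp)) (subset_closure (by simp))⟩
  · refine ⟨subset_closure (by simp), ?_⟩
    simpa using add_mem (subset_closure (by simp) : g - x ∈ closure {x, g - x})
      (subset_closure (by simp) : x ∈ closure {x, g - x})

theorem card_pairs_add_eq {G : Type*} [AddCommGroup G] (g : G) (p : G → G → Prop) :
    Nat.card {xy : G × G // xy.1 + xy.2 = g ∧ p xy.1 xy.2} = Nat.card {x // p x (g - x)} :=
  Nat.card_congr
    { toFun := fun xy => ⟨xy.1.1, by obtain ⟨⟨x, y⟩, rfl, h⟩ := xy; simpa using h⟩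
      invFun := fun x => ⟨(x, g - x), add_sub_cancel _ _, x.2⟩
      left_inv := by rintro ⟨⟨x, y⟩, rfl, h⟩; simp
      right_inv := fun _ => rfl }

namespace ZMod

theorem ker_castHom_eq_zmultiples {N R : ℕ} [NeZero N] [NeZero R] (hRN : R ∣ N) {g : ZMod N}
    (hg : addOrderOf g = N / R) :
    (castHom hRN (ZMod R)).toAddMonoidHom.ker = zmultiples g := by
  have hNR : 0 < N / R := hg ▸ addOrderOf_pos g
  have hval : R ∣ g.val := by
    have h := addOrderOf_nsmul_eq_zero g
    rw [hg, ← natCast_zmod_val g, nsmul_eq_mul, ← Nat.cast_mul, natCast_eq_zero_iff] at h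
    refine Nat.dvd_of_mul_dvd_mul_left hNR ?_
    rwa [Nat.div_mul_cancel hRN]
  symm
  refine eq_of_le_of_card_ge ?_ ?_
  · rw [zmultiples_le, AddMonoidHom.mem_ker]
    change castHom hRN (ZMod R) g = 0
    rwa [← natCast_zmod_val g, map_natCast, natCast_eq_zero_iff]
  · rw [AddMonoidHom.card_ker_of_surjective (castHom_surjective hRN), Nat.card_zmultiples, hg,
      Nat.card_zmod, Nat.card_zmod]

end ZMod

/-- Let `R ∣ N` and let `g ∈ ℤ/Nℤ` have additive order `N/R`.  The number of pairs
`(x, y)` with `x + y = g` such that `{x, y}` generates `ℤ/Nℤ` is `(N/R)·φ(R)`. -/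
theorem cyclic_length_two_full_count (N R : ℕ) (hN : 0 < N) (hR : 0 < R) (hRN : R ∣ N)
    (g : ZMod N) (hg : addOrderOf g = N / R) :
    Nat.card {xy : ZMod N × ZMod N // xy.1 + xy.2 = g ∧
        AddSubgroup.closure {xy.1, xy.2} = ⊤} = (N / R) * Nat.totient R := by
  have : NeZero N := .of_pos hN
  have : NeZero R := .of_pos hR
  set π := (ZMod.castHom hRN (ZMod R)).toAddMonoidHom
  have hπ : Surjective π := ZMod.castHom_surjective hRN
  have hker := ZMod.ker_castHom_eq_zmultiples hRN hg
  rw [card_pairs_add_eq g fun x y => AddSubgroup.closure {x, y} = ⊤]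
  simp_rw [closure_pair_sub_right, π.closure_pair_eq_top_iff hπ hker]
  rw [π.card_subtype_comp_eq_mul_card_ker hπ (fun y => zmultiples y = ⊤),
    IsAddCyclic.card_zmultiples_eq_top, π.card_ker_of_surjective hπ, Nat.card_zmod, Nat.card_zmod, mul_comm]
end

section
/- Fix positive integers p, n, divisors r ∣ d ∣ p, and let g = [u; a] ∈ G(p,p,n) be an element all of whose color values a_i lie in the subgroup dℤ/pℤ of ℤ/pℤ, whose underlying permutation u has k cycles. Let H denote the subgroup of G(p,p,n) consisting of all [v; b] with every b_i ∈ rℤ/pℤ and ∑_i b_i = 0 (the standard copy of G(p/r, p/r, n)). Then the number of distinct subgroups of the form δ⁻¹ H δ with δ = [id; c] a diagonal element of G(p,1,n) that contain g is exactly r^{k−1}. -/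
/-!
Write `δ = [id; c]` and `H = G(p/r, p/r, n)`. An element `[v; b]` lies in `δ⁻¹ H δ` iff its total
colour vanishes and `b + c ∘ v - c` has all values in `rℤ/pℤ`; testing with transpositions shows
that `δ⁻¹ H δ` determines `c` mod `r` up to a common shift. As the colours of `g` lie in
`dℤ/pℤ ⊆ rℤ/pℤ`, `g ∈ δ⁻¹ H δ` iff `c` mod `r` is constant on the cycles of `g`. So the conjugates
containing `g` correspond to the functions from the `k` cycles to `ℤ/r` modulo constants, of which
there are `r ^ (k - 1)`.
-/

open AddSubgroup

theorem ZMod.index_zmultiples_natCast {p r : ℕ} (h : r ∣ p) :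
    (zmultiples (r : ZMod p)).index = r := by
  have hcomap :
      (zmultiples (r : ZMod p)).comap (Int.castAddHom (ZMod p)) = zmultiples (r : ℤ) := by
    have hr : (r : ZMod p) = Int.castAddHom (ZMod p) r := by simp
    rw [hr, ← AddMonoidHom.map_zmultiples, comap_map_eq, ZMod.ker_intCastAddHom,
      sup_eq_left, zmultiples_le, Int.mem_zmultiples_iff]
    exact Int.natCast_dvd_natCast.2 h
  rw [← index_comap_of_surjective _ (f := Int.castAddHom (ZMod p)) ZMod.intCast_surjective,
    hcomap, Int.index_zmultiples, Int.natAbs_natCast]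

theorem Equiv.Perm.SameCycle.apply_eq_of_forall_apply_eq {α β : Type*} {u : Equiv.Perm α}
    {f : α → β} (hf : ∀ x, f (u x) = f x) {x y : α} (h : u.SameCycle x y) : f x = f y := by
  obtain ⟨z, rfl⟩ := h
  induction z using Int.induction_on generalizing x with
  | zero => rfl
  | succ z ih => rw [zpow_add_one, Equiv.Perm.mul_apply, ← ih, hf]
  | pred z ih =>
    rw [zpow_sub_one, Equiv.Perm.mul_apply, ← ih]
    simpa using hf (u⁻¹ x)

theorem Fin.cons_zero_sub_apply {G : Type*} [AddGroup G] {k : ℕ} (F : Fin (k + 1) → G)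
    (j : Fin (k + 1)) :
    (Fin.cons (0 : G) (fun l => F l.succ - F 0) : Fin (k + 1) → G) j = F j - F 0 := by
  cases j using Fin.cases <;> simp

namespace GG

variable {m n : ℕ}

theorem mk_one_mul_mul_inv (c : Fin n → ZMod m) (x : GG m n) :
    mk 1 c * x * (mk 1 c)⁻¹ = mk x.perm (c ∘ x.perm + x.col - c) := by
  ext i <;> simp [sub_eq_add_neg]

theorem mk_one_inv (c : Fin n → ZMod m) : (mk 1 c)⁻¹ = mk 1 (-c) := by
  ext i <;> simp

def conjDiag (R : AddSubgroup (ZMod m)) (c : Fin n → ZMod m) : Subgroup (GG m n) :=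
  (Gsub m n R ⊥).map (MulAut.conj (mk 1 c)⁻¹).toMonoidHom

variable {R : AddSubgroup (ZMod m)} {c c' : Fin n → ZMod m} {x : GG m n}

theorem mem_conjDiag :
    x ∈ conjDiag R c ↔ (∀ i, c (x.perm i) + x.col i - c i ∈ R) ∧ wt x = 0 := by
  rw [conjDiag, Subgroup.mem_map_equiv, MulAut.conj_symm_apply, inv_inv]
  refine and_congr ?_ ?_
  · rw [mk_one_mul_mul_inv]; rfl
  · simp

theorem mem_conjDiag_of_col_mem (hx : ∀ i, x.col i ∈ R) :
    x ∈ conjDiag R c ↔ (∀ i, (c (x.perm i) : ZMod m ⧸ R) = c i) ∧ wt x = 0 := by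
  rw [mem_conjDiag]
  refine and_congr_left' (forall_congr' fun i => ?_)
  rw [QuotientAddGroup.eq_iff_sub_mem, add_sub_right_comm, add_mem_cancel_right (hx i)]

theorem conjDiag_eq_conjDiag_iff :
    conjDiag R c = conjDiag R c' ↔
      ∀ i j, (c i : ZMod m ⧸ R) - c j = c' i - c' j := by
  constructor
  · intro h i j
    rcases eq_or_ne i j with rfl | hij
    · simp
    -- test with `δ⁻¹ [(i j); 0] δ`, whose colour at `i` is `c i - c j`
    have hmem : MulAut.conj (mk 1 c)⁻¹ (mk (Equiv.swap i j) 0) ∈ conjDiag R c' :=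
      h ▸ Subgroup.mem_map_of_mem _ ⟨fun _ => R.zero_mem, by simp [wt]⟩
    rw [MulAut.conj_apply, mk_one_inv, mk_one_mul_mul_inv, mem_conjDiag] at hmem
    rw [← QuotientAddGroup.mk_sub, ← QuotientAddGroup.mk_sub, QuotientAddGroup.eq_iff_sub_mem]
    convert hmem.1 i using 1
    simp only [Equiv.swap_apply_left, add_zero, Pi.sub_apply, Function.comp_apply, Pi.neg_apply,
      sub_neg_eq_add]
    abel
  · intro h
    ext x
    rw [mem_conjDiag, mem_conjDiag]
    refine and_congr_left' (forall_congr' fun i => ?_)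
    rw [← QuotientAddGroup.eq_zero_iff, ← QuotientAddGroup.eq_zero_iff]
    simp only [QuotientAddGroup.mk_add, QuotientAddGroup.mk_sub,
      add_sub_right_comm _ (x.col i : ZMod m ⧸ R), h]

variable (R) {k : ℕ} (ι : Fin n → Fin (k + 1))

/-- `conjDiag R c` depends only on `c` mod `R` up to a common shift. When `c` mod `R` is constant
on the fibres of `ι`, it is a function `Fin (k + 1) → ZMod m ⧸ R`; here the shift is fixed by
making it vanish at `0`. -/
noncomputable def conjDiagOfCycleClasses (f : Fin k → ZMod m ⧸ R) : Subgroup (GG m n) :=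
  conjDiag R fun x => ((Fin.cons 0 f : Fin (k + 1) → ZMod m ⧸ R) (ι x)).out

variable {R ι}

theorem conjDiagOfCycleClasses_injective (hι : Function.Surjective ι) :
    Function.Injective (conjDiagOfCycleClasses R ι) := by
  intro f f' h
  funext l
  obtain ⟨x, hx⟩ := hι l.succ
  obtain ⟨y, hy⟩ := hι 0
  simpa [hx, hy] using conjDiag_eq_conjDiag_iff.1 h x y

theorem setOf_conjDiag_containing_eq_range {g : GG m n} (hcol : ∀ i, g.col i ∈ R)
    (hwt : wt g = 0) {rep : Fin (k + 1) → Fin n}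
    (hrep : ∀ x, g.perm.SameCycle (rep (ι x)) x) (hι : ∀ x, ι (g.perm x) = ι x) :
    {K | g ∈ K ∧ ∃ c, K = conjDiag R c} = Set.range (conjDiagOfCycleClasses R ι) := by
  ext K
  constructor
  · rintro ⟨hgK, c, rfl⟩
    have hc := ((mem_conjDiag_of_col_mem hcol).1 hgK).1
    refine ⟨fun l => (c (rep l.succ) : ZMod m ⧸ R) - c (rep 0), ?_⟩
    have hclass : ∀ x, c (rep (ι x)) = (c x : ZMod m ⧸ R) := fun x =>
      (hrep x).apply_eq_of_forall_apply_eq (f := fun y => (c y : ZMod m ⧸ R)) hc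
    refine conjDiag_eq_conjDiag_iff.2 fun i j => ?_
    simp only [QuotientAddGroup.out_eq',
      Fin.cons_zero_sub_apply (fun l => (c (rep l) : ZMod m ⧸ R)), hclass]
    abel
  · rintro ⟨f, rfl⟩
    refine ⟨(mem_conjDiag_of_col_mem hcol).2 ⟨fun i => ?_, hwt⟩, _, rfl⟩
    simp [hι]

theorem card_conjDiag_containing {g : GG m n} (hcol : ∀ i, g.col i ∈ R) (hwt : wt g = 0)
    {rep : Fin (k + 1) → Fin n} (hrep : ∀ x, g.perm.SameCycle (rep (ι x)) x)
    (hι : ∀ x, ι (g.perm x) = ι x) (hsurj : Function.Surjective ι) :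
    Nat.card {K // g ∈ K ∧ ∃ c, K = conjDiag R c} = R.index ^ k := by
  change Nat.card {K | g ∈ K ∧ ∃ c, K = conjDiag R c} = _
  rw [setOf_conjDiag_containing_eq_range hcol hwt hrep hι,
    Nat.card_range_of_injective (conjDiagOfCycleClasses_injective hsurj), Nat.card_fun,
    Nat.card_fin]
  rfl

end GG

theorem count_diagonal_conjugates_general (p n k r d : ℕ) (hk : 0 < k)
    (hrd : r ∣ d) (hdp : d ∣ p) (g : GG p n)
    (hg : g ∈ GG.Gsub p n (AddSubgroup.zmultiples ((d : ZMod p))) ⊥)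
    (rep : Fin k → Fin n)
    (hrep : ∀ x : Fin n, ∃! i : Fin k, g.perm.SameCycle (rep i) x) :
    Nat.card {K : Subgroup (GG p n) //
        g ∈ K ∧ ∃ c : Fin n → ZMod p,
          K = Subgroup.map (MulEquiv.toMonoidHom (MulAut.conj (GG.mk 1 c)⁻¹))
            (GG.Gsub p n (AddSubgroup.zmultiples ((r : ZMod p))) ⊥)} = r ^ (k - 1) := by
  obtain ⟨k, rfl⟩ : ∃ k', k = k' + 1 := ⟨k - 1, by omega⟩
  choose ι hι hι_unique using hrep
  have hcol : ∀ i, g.col i ∈ zmultiples (r : ZMod p) := fun i =>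
    zmultiples_le.2 (by obtain ⟨e, rfl⟩ := hrd; exact ⟨e, by simp [mul_comm]⟩) (hg.1 i)
  have hcycle : ∀ x, ι (g.perm x) = ι x := fun x =>
    (hι_unique _ _ ((hι x).trans (Equiv.Perm.sameCycle_apply_right.2 .rfl))).symm
  calc _ = (zmultiples (r : ZMod p)).index ^ k :=
        GG.card_conjDiag_containing hcol (mem_bot.1 hg.2) hι hcycle
          fun l => ⟨rep l, (hι_unique _ _ .rfl).symm⟩
    _ = r ^ (k + 1 - 1) := by
        rw [ZMod.index_zmultiples_natCast (hrd.trans hdp), Nat.add_sub_cancel]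

/-- Let `r ∣ d ∣ p`, let `g = [u; a] ∈ G(p,p,n)` have all color values in `dℤ/pℤ` and
`k` cycles, and let `H` be the standard copy of `G(p/r, p/r, n)` inside `G(p,p,n)`.
Then exactly `r^{k−1}` of the subgroups `δ⁻¹ H δ`, for `δ = [id; c]` a diagonal element
of `G(p,1,n)`, contain `g`. -/
theorem count_diagonal_conjugates (p n k r d : ℕ) (hp : 0 < p) (hn : 0 < n) (hk : 0 < k)
    (hrd : r ∣ d) (hdp : d ∣ p) (g : GG p n)
    (hg : g ∈ GG.Gsub p n (AddSubgroup.zmultiples ((d : ZMod p))) ⊥)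
    (rep : Fin k → Fin n)
    (hrep : ∀ x : Fin n, ∃! i : Fin k, g.perm.SameCycle (rep i) x) :
    Nat.card {K : Subgroup (GG p n) //
        g ∈ K ∧ ∃ c : Fin n → ZMod p,
          K = Subgroup.map (MulEquiv.toMonoidHom (MulAut.conj (GG.mk 1 c)⁻¹))
            (GG.Gsub p n (AddSubgroup.zmultiples ((r : ZMod p))) ⊥)} = r ^ (k - 1) :=
  count_diagonal_conjugates_general p n k r d hk hrd hdp g hg rep hrep
end
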